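/- Let Q(λ) ∈ C_a^r be an m×n pencil with normal rank exactly r. Then the sum ε(Q) of the right (column) minimal indices of Q satisfies ε(Q) ≤ a. -/

import Mathlib

open Polynomial

noncomputable section

/-- The set `C_a^r` of `m×n` matrix pencils expressible as `∑_{i=1}^r uᵢ(λ)vᵢ(λ)ᵀ` with
all factors of degree at most 1, `uᵢ` constant for the first `a` indices and `vᵢ`
constant for the remaining ones. -/
def Cset (m n r a : ℕ) : Set (Matrix (Fin m) (Fin n) (Polynomial ℂ)) :=
  {Q | ∃ u : Fin r → Fin m → Polynomial ℂ, ∃ v : Fin r → Fin n → Polynomial ℂ,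
    (∀ i j, (u i j).degree ≤ 1) ∧ (∀ i j, (v i j).degree ≤ 1) ∧
    (∀ i : Fin r, (i : ℕ) < a → ∀ j, (u i j).natDegree = 0) ∧
    (∀ i : Fin r, a ≤ (i : ℕ) → ∀ j, (v i j).natDegree = 0) ∧
    Q = ∑ i : Fin r, Matrix.vecMulVec (u i) (v i)}

/-- The normal rank of a polynomial matrix: its rank over the field `ℂ(λ)`. -/
def normalRank {m n : ℕ} (Q : Matrix (Fin m) (Fin n) (Polynomial ℂ)) : ℕ :=
  (Q.map (algebraMap (Polynomial ℂ) (RatFunc ℂ))).rank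

/-- The degree of a vector polynomial: the maximum of the degrees of its entries
(`0` for the zero vector). -/
def vecDeg {N : Type*} [Fintype N] (x : N → Polynomial ℂ) : ℕ :=
  Finset.univ.sup fun j => (x j).natDegree

/-- The sum `ε(Q)` of the right (column) minimal indices of a pencil of normal rank `r`:
the least possible total degree of a polynomial basis (of `n - r` vectors, linearly
independent over `ℂ(λ)`) of the right rational nullspace of `Q`. -/
def epsSum {m n : ℕ} (r : ℕ) (Q : Matrix (Fin m) (Fin n) (Polynomial ℂ)) : ℕ :=
  sInf {s : ℕ | ∃ x : Fin (n - r) → Fin n → Polynomial ℂ,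
    LinearIndependent (RatFunc ℂ)
      (fun i => fun j => algebraMap (Polynomial ℂ) (RatFunc ℂ) (x i j)) ∧
    (∀ i, Q.mulVec (x i) = 0) ∧
    s = ∑ i, vecDeg (x i)}

/-- The sum `η(Q)` of the left (row) minimal indices of a pencil of normal rank `r`:
the least possible total degree of a polynomial basis (of `m - r` vectors, linearly
independent over `ℂ(λ)`) of the left rational nullspace of `Q`. -/
def etaSum {m n : ℕ} (r : ℕ) (Q : Matrix (Fin m) (Fin n) (Polynomial ℂ)) : ℕ :=
  sInf {s : ℕ | ∃ y : Fin (m - r) → Fin m → Polynomial ℂ,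
    LinearIndependent (RatFunc ℂ)
      (fun i => fun j => algebraMap (Polynomial ℂ) (RatFunc ℂ) (y i j)) ∧
    (∀ i, Matrix.vecMul (y i) Q = 0) ∧
    s = ∑ i, vecDeg (y i)}

end



namespace EpsAux
open Polynomial Matrix
set_option maxHeartbeats 1600000
set_option synthInstance.maxHeartbeats 400000
noncomputable section

lemma aux_degLT_iff {p : ℂ[X]} {N : ℕ} : p ∈ degreeLT ℂ N ↔ (p = 0 ∨ p.natDegree < N) := by
  rw [mem_degreeLT]
  rcases eq_or_ne p 0 with rfl | hp
  · simp only [degree_zero, eq_self_iff_true, true_or, iff_true]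
    exact WithBot.bot_lt_coe N
  · rw [natDegree_lt_iff_degree_lt hp]; tauto

lemma aux_mul_mem_degreeLT {q p : ℂ[X]} {N : ℕ} (hq : q.degree ≤ 1) (hp : p ∈ degreeLT ℂ N) :
    q * p ∈ degreeLT ℂ (N + 1) := by
  rw [aux_degLT_iff] at hp ⊢
  rcases eq_or_ne (q * p) 0 with h0 | h0
  · exact Or.inl h0
  · right
    have hqn : q.natDegree ≤ 1 := natDegree_le_iff_degree_le.mpr hq
    have hpn : p.natDegree < N := by
      rcases hp with rfl | h
      · simp at h0
      · exact h
    calc (q*p).natDegree ≤ q.natDegree + p.natDegree := natDegree_mul_le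
      _ < N + 1 := by omega

lemma aux_mul_mem_degreeLT_const {q p : ℂ[X]} {N : ℕ} (hq : q.natDegree = 0)
    (hp : p ∈ degreeLT ℂ N) : q * p ∈ degreeLT ℂ N := by
  rw [aux_degLT_iff] at hp ⊢
  rcases eq_or_ne (q * p) 0 with h0 | h0
  · exact Or.inl h0
  · right
    have hpn : p.natDegree < N := by
      rcases hp with rfl | h
      · simp at h0
      · exact h
    calc (q*p).natDegree ≤ q.natDegree + p.natDegree := natDegree_mul_le
      _ < N := by omega

lemma aux_X_mul_mem_degreeLT {p : ℂ[X]} {N : ℕ} (h : X * p ∈ degreeLT ℂ (N + 1)) :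
    p ∈ degreeLT ℂ N := by
  rw [aux_degLT_iff] at h ⊢
  rcases eq_or_ne p 0 with rfl | hp
  · exact Or.inl rfl
  · right
    have hx : (X : ℂ[X]) ≠ 0 := X_ne_zero
    have := natDegree_mul hx hp
    rcases h with h0 | h
    · exact absurd (mul_eq_zero.mp h0) (by tauto)
    · rw [this, natDegree_X] at h; omega

lemma aux_mem_degreeLT_X_mul {p : ℂ[X]} {N : ℕ} (h : p ∈ degreeLT ℂ N) :
    X * p ∈ degreeLT ℂ (N + 1) := aux_mul_mem_degreeLT degree_X_le h



instance degLT_findim (d : ℕ) : FiniteDimensional ℂ (degreeLT ℂ d) :=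
  Module.Finite.equiv (degreeLTEquiv ℂ d).symm

lemma finrank_degLT (d : ℕ) : Module.finrank ℂ (degreeLT ℂ d) = d := by
  rw [LinearEquiv.finrank_eq (degreeLTEquiv ℂ d)]
  simp

variable {m n : ℕ}

/-- multiplication by X as a `ℂ`-linear endomorphism of `Fin n → ℂ[X]` -/
def muX (n : ℕ) : (Fin n → ℂ[X]) →ₗ[ℂ] (Fin n → ℂ[X]) :=
  (LinearMap.lsmul ℂ[X] (Fin n → ℂ[X]) X).restrictScalars ℂ

lemma muX_apply (x : Fin n → ℂ[X]) : muX n x = fun j => X * x j := rfl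

lemma muX_apply' (x : Fin n → ℂ[X]) : muX n x = (X : ℂ[X]) • x := rfl

lemma muX_inj : Function.Injective (muX n) := by
  intro x y h
  funext j
  have := congrFun h j
  simp only [muX_apply] at this
  exact mul_left_cancel₀ X_ne_zero this

/-- polynomial solutions with entries of degree < d -/
def Vd (Q : Matrix (Fin m) (Fin n) ℂ[X]) (d : ℕ) : Submodule ℂ (Fin n → ℂ[X]) :=
  (Submodule.pi Set.univ fun _ => degreeLT ℂ d) ⊓
    (LinearMap.ker (Q.mulVecLin.restrictScalars ℂ))

lemma mem_Vd {Q : Matrix (Fin m) (Fin n) ℂ[X]} {d : ℕ} {x : Fin n → ℂ[X]} :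
    x ∈ Vd Q d ↔ (∀ j, x j ∈ degreeLT ℂ d) ∧ Q.mulVec x = 0 := by
  simp [Vd, Submodule.mem_pi, Matrix.mulVecLin]

lemma Vd_mono {Q : Matrix (Fin m) (Fin n) ℂ[X]} {d d' : ℕ} (h : d ≤ d') : Vd Q d ≤ Vd Q d' := by
  intro x hx
  rw [mem_Vd] at hx ⊢
  exact ⟨fun j => degreeLT_mono (by exact_mod_cast h) (hx.1 j), hx.2⟩

lemma Vd_zero {Q : Matrix (Fin m) (Fin n) ℂ[X]} : Vd Q 0 = ⊥ := by
  rw [eq_bot_iff]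
  intro x hx
  rw [mem_Vd] at hx
  have : x = 0 := by
    funext j
    have := hx.1 j
    rw [mem_degreeLT] at this
    simpa [degree_eq_bot] using this
  simp [this, Submodule.mem_bot]

lemma muX_mem_Vd {Q : Matrix (Fin m) (Fin n) ℂ[X]} {d : ℕ} {x : Fin n → ℂ[X]}
    (hx : x ∈ Vd Q d) : muX n x ∈ Vd Q (d + 1) := by
  rw [mem_Vd] at hx ⊢
  constructor
  · intro j; exact aux_mem_degreeLT_X_mul (hx.1 j)
  · have : muX n x = (X : ℂ[X]) • x := rfl
    rw [this, Matrix.mulVec_smul, hx.2, smul_zero]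

lemma muX_mem_Vd_rev {Q : Matrix (Fin m) (Fin n) ℂ[X]} {d : ℕ} {x : Fin n → ℂ[X]}
    (hx : muX n x ∈ Vd Q (d + 1)) : x ∈ Vd Q d := by
  rw [mem_Vd] at hx ⊢
  constructor
  · intro j; exact aux_X_mul_mem_degreeLT (hx.1 j)
  · have h2 : (X : ℂ[X]) • Q.mulVec x = 0 := by
      rw [← Matrix.mulVec_smul]; exact hx.2
    funext k
    have := congrFun h2 k
    simp only [Pi.smul_apply, smul_eq_mul, Pi.zero_apply] at this
    exact mul_left_cancel₀ X_ne_zero (by simpa using this)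

lemma Vd_inf_map_muX {Q : Matrix (Fin m) (Fin n) ℂ[X]} (d : ℕ) :
    Vd Q (d + 1) ⊓ (Vd Q (d + 1)).map (muX n) = (Vd Q d).map (muX n) := by
  apply le_antisymm
  · rintro x ⟨hx1, y, hy, rfl⟩
    exact ⟨y, muX_mem_Vd_rev hx1, rfl⟩
  · rintro x ⟨y, hy, rfl⟩
    exact ⟨muX_mem_Vd hy, y, Vd_mono (Nat.le_succ d) hy, rfl⟩

instance Vd_findim (Q : Matrix (Fin m) (Fin n) ℂ[X]) (d : ℕ) : FiniteDimensional ℂ (Vd Q d) := by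
  let f : Vd Q d →ₗ[ℂ] (Fin n → degreeLT ℂ d) :=
    { toFun := fun x => fun j => ⟨x.1 j, ((mem_Vd.mp x.2).1 j)⟩
      map_add' := fun x y => by funext j; simp
      map_smul' := fun c x => by funext j; simp }
  have hf : Function.Injective f := by
    intro x y h
    apply Subtype.ext
    funext j
    exact congrArg Subtype.val (congrFun h j)
  exact FiniteDimensional.of_injective f hf

lemma finrank_Vd_pi {d : ℕ} : Module.finrank ℂ (Fin n → degreeLT ℂ d) = n * d := by
  rw [Module.finrank_pi_fintype]
  simp [finrank_degLT, Finset.sum_const]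



lemma card_filter_lt (hra : a ≤ r) :
    ∑ i : Fin r, (if (i : ℕ) < a then 1 else 0) = a := by
  rw [← Finset.card_filter]
  have : (Finset.univ.filter fun i : Fin r => (i : ℕ) < a) =
      Finset.image (Fin.castLE hra) Finset.univ := by
    ext i
    simp only [Finset.mem_filter, Finset.mem_univ, true_and, Finset.mem_image]
    constructor
    · intro hi
      refine ⟨⟨i, hi⟩, ?_⟩
      ext
      simp
    · rintro ⟨k, rfl⟩; exact k.2
  rw [this, Finset.card_image_of_injective _ (Fin.castLE_injective hra), Finset.card_univ,
    Fintype.card_fin]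

lemma lower_bound_Vd (Q : Matrix (Fin m) (Fin n) ℂ[X]) (u : Fin r → Fin m → ℂ[X])
    (v : Fin r → Fin n → ℂ[X]) (hra : a ≤ r)
    (hv1 : ∀ i j, (v i j).degree ≤ 1)
    (hva : ∀ i : Fin r, a ≤ (i : ℕ) → ∀ j, (v i j).natDegree = 0)
    (hQ : Q = ∑ i : Fin r, Matrix.vecMulVec (u i) (v i)) (d : ℕ) :
    n * d ≤ Module.finrank ℂ (Vd Q d) + (r * d + a) := by
  classical
  have hmem : ∀ (x : Fin n → degreeLT ℂ d) (i : Fin r),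
      (∑ j, v i j * (x j).1) ∈ degreeLT ℂ (d + if (i : ℕ) < a then 1 else 0) := by
    intro x i
    apply Submodule.sum_mem
    intro j _
    by_cases hia : (i : ℕ) < a
    · simp only [hia, if_true]
      exact aux_mul_mem_degreeLT (hv1 i j) (x j).2
    · simp only [hia, if_false, add_zero]
      exact aux_mul_mem_degreeLT_const (hva i (le_of_not_gt hia) j) (x j).2
  let G : (Fin n → degreeLT ℂ d) →ₗ[ℂ] (Π i : Fin r, degreeLT ℂ (d + if (i : ℕ) < a then 1 else 0)) :=
    { toFun := fun x => fun i => ⟨∑ j, v i j * (x j).1, hmem x i⟩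
      map_add' := fun x y => by
        funext i
        apply Subtype.ext
        simp [Pi.add_apply, Submodule.coe_add, mul_add, Finset.sum_add_distrib]
      map_smul' := fun c x => by
        funext i
        apply Subtype.ext
        simp [Pi.smul_apply, Submodule.coe_smul, Finset.smul_sum, mul_smul_comm] }
  -- kernel of G injects into Vd Q d
  let κ : LinearMap.ker G →ₗ[ℂ] Vd Q d :=
    { toFun := fun x => ⟨fun j => (x.1 j).1, by
        rw [mem_Vd]
        refine ⟨fun j => (x.1 j).2, ?_⟩
        funext k
        have hx := x.2
        rw [LinearMap.mem_ker] at hx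
        have hxi : ∀ i : Fin r, (∑ j, v i j * (x.1 j).1) = 0 := by
          intro i
          have := congrFun hx i
          exact congrArg Subtype.val this
        have hQkj : ∀ j, Q k j = ∑ i : Fin r, u i k * v i j := by
          intro j
          rw [hQ]
          simp [Matrix.sum_apply, Matrix.vecMulVec_apply]
        show (Matrix.mulVec Q (fun j => (x.1 j).1)) k = 0
        have hmv : (Matrix.mulVec Q (fun j => (x.1 j).1)) k = ∑ j, Q k j * (x.1 j).1 := rfl
        rw [hmv]
        calc ∑ j, Q k j * (x.1 j).1
            = ∑ j, ∑ i : Fin r, u i k * v i j * (x.1 j).1 := by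
              apply Finset.sum_congr rfl
              intro j _
              rw [hQkj j, Finset.sum_mul]
          _ = ∑ i : Fin r, ∑ j, u i k * v i j * (x.1 j).1 := Finset.sum_comm
          _ = ∑ i : Fin r, u i k * ∑ j, v i j * (x.1 j).1 := by
              apply Finset.sum_congr rfl
              intro i _
              rw [Finset.mul_sum]
              apply Finset.sum_congr rfl
              intro j _
              ring
          _ = 0 := by simp [hxi]⟩
      map_add' := fun x y => by apply Subtype.ext; funext j; simp
      map_smul' := fun c x => by apply Subtype.ext; funext j; simp }
  have hκ : Function.Injective κ := by
    intro x y h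
    apply Subtype.ext
    funext j
    apply Subtype.ext
    exact congrFun (congrArg Subtype.val h) j
  have h1 : Module.finrank ℂ (LinearMap.ker G) ≤ Module.finrank ℂ (Vd Q d) :=
    LinearMap.finrank_le_finrank_of_injective hκ
  have h2 : Module.finrank ℂ (LinearMap.range G) ≤ r * d + a := by
    have hle := Submodule.finrank_le (LinearMap.range G)
    have hc : Module.finrank ℂ (Π i : Fin r, degreeLT ℂ (d + if (i : ℕ) < a then 1 else 0))
        = r * d + a := by
      rw [Module.finrank_pi_fintype]
      simp only [finrank_degLT]
      rw [Finset.sum_add_distrib, Finset.sum_const, Finset.card_univ, Fintype.card_fin,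
        card_filter_lt hra, smul_eq_mul]
    exact le_trans hle (le_of_eq hc)
  have h3 := LinearMap.finrank_range_add_finrank_ker G
  rw [finrank_Vd_pi] at h3
  omega



lemma exists_compl_in {M : Type*} [AddCommGroup M] [Module ℂ M]
    (Wb Us : Submodule ℂ M) (h : Us ≤ Wb) [FiniteDimensional ℂ Wb] :
    ∃ H : Submodule ℂ M, H ≤ Wb ∧ H ⊓ Us = ⊥ ∧
      Module.finrank ℂ Us + Module.finrank ℂ H = Module.finrank ℂ Wb := by
  obtain ⟨H', hH'⟩ := Submodule.exists_isCompl (Us.comap Wb.subtype)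
  refine ⟨H'.map Wb.subtype, Submodule.map_subtype_le _ _, ?_, ?_⟩
  · rw [eq_bot_iff]
    rintro x ⟨⟨y, hy, rfl⟩, hx2⟩
    have hyU : y ∈ Us.comap Wb.subtype := hx2
    have : y ∈ (Us.comap Wb.subtype) ⊓ H' := ⟨hyU, hy⟩
    rw [hH'.inf_eq_bot] at this
    have hy0 : y = 0 := (Submodule.mem_bot ℂ).mp this
    simp [hy0]
  · have e1 : Module.finrank ℂ (Us.comap Wb.subtype) = Module.finrank ℂ Us :=
      LinearEquiv.finrank_eq (Submodule.comapSubtypeEquivOfLe h)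
    have e2 : Module.finrank ℂ (H'.map Wb.subtype) = Module.finrank ℂ H' :=
      (LinearEquiv.finrank_eq (Submodule.equivMapOfInjective _ (Submodule.injective_subtype Wb) H')).symm
    rw [← e1, e2]
    exact Submodule.finrank_add_eq_of_isCompl hH'

/-- the "new directions" space at stage `d` -/
def Ud (Q : Matrix (Fin m) (Fin n) ℂ[X]) (d : ℕ) : Submodule ℂ (Fin n → ℂ[X]) :=
  Vd Q d ⊔ (Vd Q d).map (muX n)

lemma Ud_le (Q : Matrix (Fin m) (Fin n) ℂ[X]) (d : ℕ) : Ud Q d ≤ Vd Q (d + 1) := by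
  apply sup_le (Vd_mono (Nat.le_succ d))
  rintro x ⟨y, hy, rfl⟩
  exact muX_mem_Vd hy

lemma Ud_zero (Q : Matrix (Fin m) (Fin n) ℂ[X]) : Ud Q 0 = ⊥ := by
  rw [Ud, Vd_zero]
  simp

instance Ud_findim (Q : Matrix (Fin m) (Fin n) ℂ[X]) (d : ℕ) : FiniteDimensional ℂ (Ud Q d) :=
  Submodule.finiteDimensional_of_le (Ud_le Q d)

lemma finrank_Ud (Q : Matrix (Fin m) (Fin n) ℂ[X]) (d : ℕ) :
    Module.finrank ℂ (Ud Q (d + 1)) + Module.finrank ℂ (Vd Q d) =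
      2 * Module.finrank ℂ (Vd Q (d + 1)) := by
  have hmap : ∀ e : ℕ, Module.finrank ℂ ((Vd Q e).map (muX n)) = Module.finrank ℂ (Vd Q e) :=
    fun e => (LinearEquiv.finrank_eq (Submodule.equivMapOfInjective _ muX_inj (Vd Q e))).symm
  have hfd : FiniteDimensional ℂ ((Vd Q (d+1)).map (muX n)) := by
    apply Submodule.finiteDimensional_of_le (S₂ := Vd Q (d+2))
    rintro x ⟨y, hy, rfl⟩
    exact muX_mem_Vd hy
  have h := Submodule.finrank_sup_add_finrank_inf_eq (Vd Q (d+1)) ((Vd Q (d+1)).map (muX n))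
  rw [Vd_inf_map_muX, hmap d, hmap (d+1)] at h
  rw [Ud]
  omega

lemma exists_stage (Q : Matrix (Fin m) (Fin n) ℂ[X]) (d : ℕ) :
    ∃ (t : ℕ) (b : Fin t → (Fin n → ℂ[X])),
      (∀ k, b k ∈ Vd Q (d + 1)) ∧
      LinearIndependent ℂ b ∧
      (∀ γ : Fin t → ℂ, (∑ k, γ k • b k) ∈ Ud Q d → γ = 0) ∧
      Module.finrank ℂ (Ud Q d) + t = Module.finrank ℂ (Vd Q (d + 1)) := by
  obtain ⟨H, hHV, hHU, hHrank⟩ := exists_compl_in (Vd Q (d+1)) (Ud Q d) (Ud_le Q d)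
  have : FiniteDimensional ℂ H := Submodule.finiteDimensional_of_le hHV
  let β := Module.finBasis ℂ H
  refine ⟨Module.finrank ℂ H, fun k => (β k : Fin n → ℂ[X]), fun k => hHV (β k).2, ?_, ?_, hHrank⟩
  · exact β.linearIndependent.map' H.subtype (Submodule.ker_subtype H)
  · intro γ hγ
    have hz : (∑ k, γ k • (β k : Fin n → ℂ[X])) = ((∑ k, γ k • β k : H) : Fin n → ℂ[X]) := by
      simp
    have hmem : (∑ k, γ k • (β k : Fin n → ℂ[X])) ∈ H ⊓ Ud Q d := by
      refine ⟨?_, hγ⟩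
      rw [hz]
      exact ((∑ k, γ k • β k : H)).2
    rw [hHU] at hmem
    have : (∑ k, γ k • β k : H) = 0 := by
      apply Subtype.ext
      rw [← hz]
      simpa using hmem
    have hind := β.linearIndependent
    rw [Fintype.linearIndependent_iff] at hind
    funext k
    exact hind γ this k

section Family
variable {D : ℕ} {t : ℕ → ℕ} {Q : Matrix (Fin m) (Fin n) ℂ[X]}
  {b : ∀ d : ℕ, Fin (t d) → (Fin n → ℂ[X])}

lemma lemmaA (hbV : ∀ d k, b d k ∈ Vd Q (d+1))
    (hstage : ∀ d (γ : Fin (t d) → ℂ), (∑ k, γ k • b d k) ∈ Ud Q d → γ = 0) :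
    ∀ (klim : ℕ) (γ : (Σ d : Fin D, Fin (t (d : ℕ))) → ℂ) (w : Fin n → ℂ[X]),
    (∀ i : (Σ d : Fin D, Fin (t (d : ℕ))), klim ≤ (i.1 : ℕ) → γ i = 0) →
    (∑ i : (Σ d : Fin D, Fin (t (d : ℕ))), γ i • b (i.1 : ℕ) i.2 = muX n w) → γ = 0 := by
  intro klim
  induction klim with
  | zero =>
    intro γ w hsup _
    funext i
    exact hsup i (Nat.zero_le _)
  | succ K IH =>
    intro γ w hsup heq
    by_cases hD : K < D
    · set d₀ : Fin D := ⟨K, hD⟩ with hd₀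
      have hu : (∑ i : (Σ d : Fin D, Fin (t (d : ℕ))), γ i • b (i.1 : ℕ) i.2) ∈ Vd Q (K+1) := by
        apply Submodule.sum_mem
        intro i _
        rcases le_or_gt (K+1) (i.1 : ℕ) with h | h
        · rw [hsup i h]; simp
        · exact Submodule.smul_mem _ _ (Vd_mono (by omega) (hbV (i.1 : ℕ) i.2))
      have hw : w ∈ Vd Q K := muX_mem_Vd_rev (heq ▸ hu)
      set h1 := ∑ i : (Σ d : Fin D, Fin (t (d : ℕ))),
        (if (i.1 : ℕ) = K then γ i else 0) • b (i.1 : ℕ) i.2 with hh1def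
      set v1 := ∑ i : (Σ d : Fin D, Fin (t (d : ℕ))),
        (if (i.1 : ℕ) = K then 0 else γ i) • b (i.1 : ℕ) i.2 with hv1def
      have hsplit : h1 + v1 = ∑ i : (Σ d : Fin D, Fin (t (d : ℕ))), γ i • b (i.1 : ℕ) i.2 := by
        rw [hh1def, hv1def, ← Finset.sum_add_distrib]
        apply Finset.sum_congr rfl
        intro i _
        by_cases hik : (i.1 : ℕ) = K <;> simp [hik]
      have hv1 : v1 ∈ Vd Q K := by
        apply Submodule.sum_mem
        intro i _
        by_cases hik : (i.1 : ℕ) = K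
        · simp [hik]
        · rw [if_neg hik]
          rcases le_or_gt (K+1) (i.1 : ℕ) with h | h
          · rw [hsup i h]; simp
          · exact Submodule.smul_mem _ _ (Vd_mono (by omega) (hbV (i.1 : ℕ) i.2))
      have hh1U : h1 ∈ Ud Q K := by
        have hsub : h1 = muX n w - v1 := eq_sub_of_add_eq (hsplit.trans heq)
        rw [hsub]
        apply Submodule.sub_mem
        · exact Submodule.mem_sup_right ⟨w, hw, rfl⟩
        · exact Submodule.mem_sup_left hv1
      have hcol : h1 = ∑ k : Fin (t K), γ ⟨d₀, k⟩ • b K k := by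
        rw [hh1def]
        rw [← Finset.univ_sigma_univ, Finset.sum_sigma]
        have hterm : ∀ d : Fin D, (∑ k : Fin (t (d : ℕ)),
            (if (d : ℕ) = K then γ ⟨d, k⟩ else 0) • b (d : ℕ) k) =
            (if d = d₀ then ∑ k : Fin (t (d : ℕ)), γ ⟨d, k⟩ • b (d : ℕ) k else 0) := by
          intro d
          by_cases hdk : (d : ℕ) = K
          · have : d = d₀ := Fin.ext hdk
            simp [this, hd₀]
          · have : d ≠ d₀ := fun hc => hdk (by rw [hc])
            simp [hdk, this]
        rw [Finset.sum_congr rfl (fun d _ => hterm d)]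
        rw [Finset.sum_ite_eq' Finset.univ d₀]
        simp
        rfl
      have hstK : (fun k : Fin (t K) => γ ⟨d₀, k⟩) = 0 := by
        apply hstage K
        rw [← hcol]
        exact hh1U
      apply IH γ w _ heq
      rintro ⟨d, k⟩ hi
      by_cases hdk : (d : ℕ) = K
      · have hdd : d = d₀ := Fin.ext hdk
        subst hdd
        exact congrFun hstK k
      · exact hsup ⟨d, k⟩ (by simp at hi ⊢; omega)
    · apply IH γ w _ heq
      intro i hi
      have := i.1.2
      omega

lemma coeff_zero_eq_zero_of_rel (hbV : ∀ d k, b d k ∈ Vd Q (d+1))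
    (hstage : ∀ d (γ : Fin (t d) → ℂ), (∑ k, γ k • b d k) ∈ Ud Q d → γ = 0)
    (c : (Σ d : Fin D, Fin (t (d : ℕ))) → ℂ[X])
    (hrel : ∑ i : (Σ d : Fin D, Fin (t (d : ℕ))), c i • b (i.1 : ℕ) i.2 = 0) :
    ∀ i, (c i).coeff 0 = 0 := by
  set S := ∑ i : (Σ d : Fin D, Fin (t (d : ℕ))), (c i).divX • b (i.1 : ℕ) i.2 with hS
  have hdecomp : ∑ i : (Σ d : Fin D, Fin (t (d : ℕ))),
      ((c i).coeff 0 : ℂ) • b (i.1 : ℕ) i.2 = muX n (-S) := by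
    have h1 : ∀ i : (Σ d : Fin D, Fin (t (d : ℕ))),
        c i • b (i.1 : ℕ) i.2 =
          (X : ℂ[X]) • ((c i).divX • b (i.1 : ℕ) i.2) + ((c i).coeff 0 : ℂ) • b (i.1 : ℕ) i.2 := by
      intro i
      have hsm : ((c i).coeff 0 : ℂ) • b (i.1 : ℕ) i.2 = (C ((c i).coeff 0) : ℂ[X]) • b (i.1 : ℕ) i.2 := by
        funext j
        simp [Polynomial.smul_eq_C_mul]
      rw [hsm, smul_smul, ← add_smul, X_mul_divX_add]
    have h2 : (0 : Fin n → ℂ[X]) = (X : ℂ[X]) • S + ∑ i : (Σ d : Fin D, Fin (t (d : ℕ))),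
        ((c i).coeff 0 : ℂ) • b (i.1 : ℕ) i.2 := by
      rw [← hrel, hS, Finset.smul_sum, ← Finset.sum_add_distrib]
      exact Finset.sum_congr rfl fun i _ => h1 i
    rw [muX_apply', smul_neg]
    linear_combination (norm := abel) -h2
  have := lemmaA hbV hstage D (fun i => (c i).coeff 0) (-S)
    (fun i hi => absurd i.1.2 (by omega)) hdecomp
  intro i
  exact congrFun this i

lemma poly_indep (hbV : ∀ d k, b d k ∈ Vd Q (d+1))
    (hstage : ∀ d (γ : Fin (t d) → ℂ), (∑ k, γ k • b d k) ∈ Ud Q d → γ = 0) :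
    ∀ (N : ℕ) (c : (Σ d : Fin D, Fin (t (d : ℕ))) → ℂ[X]),
      (∀ i, (c i).natDegree ≤ N) →
      (∑ i : (Σ d : Fin D, Fin (t (d : ℕ))), c i • b (i.1 : ℕ) i.2 = 0) → ∀ i, c i = 0 := by
  intro N
  induction N with
  | zero =>
    intro c hdeg hrel i
    have h0 := coeff_zero_eq_zero_of_rel hbV hstage c hrel i
    have := Polynomial.eq_C_of_natDegree_le_zero (hdeg i)
    rw [this, h0, map_zero]
  | succ N IH =>
    intro c hdeg hrel i
    have h0 := coeff_zero_eq_zero_of_rel hbV hstage c hrel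
    have hXc : ∀ i, c i = X * (c i).divX := by
      intro i
      conv_lhs => rw [← X_mul_divX_add (c i)]
      rw [h0 i, map_zero, add_zero]
    have hXS : muX n (∑ i : (Σ d : Fin D, Fin (t (d : ℕ))), (c i).divX • b (i.1 : ℕ) i.2)
        = muX n 0 := by
      rw [map_zero, ← hrel, muX_apply', Finset.smul_sum]
      apply Finset.sum_congr rfl
      intro i _
      rw [smul_smul, ← hXc i]
    have hS0 := muX_inj hXS
    have hdeg' : ∀ i, ((c i).divX).natDegree ≤ N := by
      intro i
      have := Polynomial.natDegree_divX_eq_natDegree_tsub_one (p := c i)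
      have h2 := hdeg i
      omega
    have := IH (fun i => (c i).divX) hdeg' hS0 i
    rw [hXc i, this, mul_zero]

lemma family_K_indep (hbV : ∀ d k, b d k ∈ Vd Q (d+1))
    (hstage : ∀ d (γ : Fin (t d) → ℂ), (∑ k, γ k • b d k) ∈ Ud Q d → γ = 0) :
    LinearIndependent (RatFunc ℂ) (fun i : (Σ d : Fin D, Fin (t (d : ℕ))) =>
      fun j => algebraMap ℂ[X] (RatFunc ℂ) (b (i.1 : ℕ) i.2 j)) := by
  classical
  set algK := algebraMap ℂ[X] (RatFunc ℂ) with halgK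
  set xK : (Σ d : Fin D, Fin (t (d : ℕ))) → (Fin n → RatFunc ℂ) :=
    fun i => fun j => algK (b (i.1 : ℕ) i.2 j) with hxK
  rw [Fintype.linearIndependent_iff]
  intro g hg i₀
  set c : (Σ d : Fin D, Fin (t (d : ℕ))) → ℂ[X] :=
    fun i => (g i).num * ∏ i' ∈ Finset.univ.erase i, (g i').denom with hc
  set q : ℂ[X] := ∏ i', (g i').denom with hq
  have hqg : ∀ i, algK (c i) = algK q * g i := by
    intro i
    have hsplit : q = (g i).denom * ∏ i' ∈ Finset.univ.erase i, (g i').denom :=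
      (Finset.mul_prod_erase Finset.univ _ (Finset.mem_univ i)).symm
    have hden0 : algK (g i).denom ≠ 0 :=
      RatFunc.algebraMap_ne_zero (RatFunc.denom_ne_zero (g i))
    have hnum : algK (g i).num = g i * algK (g i).denom := by
      have h := RatFunc.num_div_denom (g i)
      rw [div_eq_iff hden0] at h
      exact h
    rw [hsplit, hc]
    simp only [_root_.map_mul]
    rw [hnum]
    ring
  have hrel : ∑ i : (Σ d : Fin D, Fin (t (d : ℕ))), c i • b (i.1 : ℕ) i.2 = 0 := by
    have hbig : ∑ i : (Σ d : Fin D, Fin (t (d : ℕ))), algK (c i) • xK i = 0 := by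
      have h1 : ∀ i : (Σ d : Fin D, Fin (t (d : ℕ))), algK (c i) • xK i
          = algK q • (g i • xK i) := by
        intro i
        rw [smul_smul, hqg i]
      rw [Finset.sum_congr rfl fun i _ => h1 i, ← Finset.smul_sum, hg, smul_zero]
    funext j
    have hj := congrFun hbig j
    simp only [Finset.sum_apply, Pi.smul_apply, Pi.zero_apply, hxK, smul_eq_mul] at hj
    have hinj : Function.Injective algK := IsFractionRing.injective ℂ[X] (RatFunc ℂ)
    apply hinj
    simp only [Pi.zero_apply, map_zero]
    rw [Finset.sum_apply]
    rw [map_sum]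
    rw [← hj]
    apply Finset.sum_congr rfl
    intro i _
    rw [Pi.smul_apply, smul_eq_mul, _root_.map_mul]
  have hc0 := poly_indep hbV hstage (Finset.univ.sup fun i => (c i).natDegree) c
    (fun i => Finset.le_sup (f := fun i => (c i).natDegree) (Finset.mem_univ i)) hrel i₀
  rw [hc] at hc0
  have hprod_ne : (∏ i' ∈ Finset.univ.erase i₀, (g i').denom) ≠ 0 :=
    Finset.prod_ne_zero_iff.mpr fun i' _ => RatFunc.denom_ne_zero (g i')
  have hnum0 : (g i₀).num = 0 := by
    rcases mul_eq_zero.mp hc0 with h | h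
    · exact h
    · exact absurd h hprod_ne
  rw [← RatFunc.num_div_denom (g i₀), hnum0, map_zero, zero_div]

end Family



section MainAssembly
variable {m n r a : ℕ}

lemma vecDeg_le_of_mem_Vd {Q : Matrix (Fin m) (Fin n) ℂ[X]} {d : ℕ} {x : Fin n → ℂ[X]}
    (hx : x ∈ Vd Q (d+1)) : vecDeg x ≤ d := by
  apply Finset.sup_le
  intro j _
  have := (mem_Vd.mp hx).1 j
  rw [aux_degLT_iff] at this
  rcases this with h | h
  · simp [h]
  · omega

lemma arith_ident (t T : ℕ → ℕ) (hTsucc : ∀ d, T (d+1) = T d + t d) :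
    ∀ A : ℕ, ∑ d ∈ Finset.range (A+1), d * t d + ∑ d ∈ Finset.range A, T (d+1)
      = A * T (A+1) := by
  intro A
  induction A with
  | zero => simp
  | succ A ih =>
    rw [Finset.sum_range_succ (f := fun d => d * t d),
      Finset.sum_range_succ (f := fun d => T (d+1))]
    have h1 : T (A+2) = T (A+1) + t (A+1) := hTsucc (A+1)
    have h2 : (A+1) * T (A+2) = (A+1) * T (A+1) + (A+1) * t (A+1) := by rw [h1]; ring
    have h3 : (A+1) * t (A+1) = A * t (A+1) + t (A+1) := by ring
    have h4 : (A+1) * T (A+1) = A * T (A+1) + T (A+1) := by ring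
    linarith [ih]

end MainAssembly
end
end EpsAux

/-- If `Q(λ) ∈ C_a^r` has normal rank exactly `r`, then the sum `ε(Q)` of its right
(column) minimal indices satisfies `ε(Q) ≤ a`. -/
theorem epsSum_le_of_mem_Cset (m n r a : ℕ) (ha : a ≤ r)
    (Q : Matrix (Fin m) (Fin n) (Polynomial ℂ))
    (hQ : Q ∈ Cset m n r a) (hrank : normalRank Q = r) :
    epsSum r Q ≤ a := by
  classical
  obtain ⟨u, v, hu1, hv1, hua, hva, hQeq⟩ := hQ
  choose t b hbV hbind hstage hstagerank using fun d : ℕ => EpsAux.exists_stage Q d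
  set algK := algebraMap (Polynomial ℂ) (RatFunc ℂ) with halgK
  set QK := Q.map algK with hQK
  set W := LinearMap.ker (QK.mulVecLin) with hWdef
  -- rank-nullity
  have hrn : Module.finrank (RatFunc ℂ) W + r = n := by
    have h1 := LinearMap.finrank_range_add_finrank_ker (QK.mulVecLin)
    have h2 : Module.finrank (RatFunc ℂ) (LinearMap.range QK.mulVecLin) = r := by
      rw [← Matrix.rank]
      exact hrank
    rw [h2, Module.finrank_fin_fun] at h1
    rw [hWdef]
    omega
  have hrle : r ≤ n := by omega
  -- images of the b's lie in W
  have hbW : ∀ (d : ℕ) (k : Fin (t d)), (fun j => algK (b d k j)) ∈ W := by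
    intro d k
    have hker : Q.mulVec (b d k) = 0 := (EpsAux.mem_Vd.mp (hbV d k)).2
    rw [hWdef, LinearMap.mem_ker]
    rw [Matrix.mulVecLin_apply]
    funext kk
    rw [hQK, show (fun j => algK (b d k j)) = algK ∘ (b d k) from rfl,
      ← algK.map_mulVec Q (b d k) kk, hker]
    simp
  -- total count bound
  have hTle : ∀ D : ℕ, (∑ d ∈ Finset.range D, t d) ≤ n - r := by
    intro D
    have hind := EpsAux.family_K_indep (D := D) hbV hstage
    let fam' : (Σ d : Fin D, Fin (t (d : ℕ))) → W :=
      fun i => ⟨fun j => algK (b (i.1 : ℕ) i.2 j), hbW (i.1 : ℕ) i.2⟩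
    have hind' : LinearIndependent (RatFunc ℂ) fam' := by
      apply LinearIndependent.of_comp W.subtype
      exact hind
    have hcard := hind'.fintype_card_le_finrank
    rw [Fintype.card_sigma] at hcard
    simp only [Fintype.card_fin] at hcard
    rw [Finset.sum_range]
    omega
  -- arithmetic
  set e : ℕ → ℕ := fun d => Module.finrank ℂ (EpsAux.Vd Q d) with hedef
  set T : ℕ → ℕ := fun D => ∑ d ∈ Finset.range D, t d with hTdef
  have he0 : e 0 = 0 := by
    show Module.finrank ℂ (EpsAux.Vd Q 0) = 0
    rw [EpsAux.Vd_zero]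
    exact finrank_bot ℂ _
  have hU0 : Module.finrank ℂ (EpsAux.Ud Q 0) = 0 := by
    rw [EpsAux.Ud_zero]
    exact finrank_bot ℂ _
  have hsr : ∀ d, Module.finrank ℂ (EpsAux.Ud Q d) + t d = e (d+1) := hstagerank
  have hUr : ∀ d, Module.finrank ℂ (EpsAux.Ud Q (d+1)) + e d = 2 * e (d+1) :=
    EpsAux.finrank_Ud Q
  have hTsucc : ∀ d, T (d+1) = T d + t d := fun d => Finset.sum_range_succ t d
  have hE : ∀ d, e (d+1) = e d + T (d+1) := by
    intro d
    induction d with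
    | zero =>
      have h1 := hsr 0
      have h2 := hTsucc 0
      have h3 : T 0 = 0 := by simp [hTdef]
      omega
    | succ d ih =>
      have h1 := hsr (d+1)
      have h2 := hUr d
      have h3 := hTsucc (d+1)
      have h4 := hsr d
      omega
  have heD : ∀ D, e D = ∑ d ∈ Finset.range D, T (d+1) := by
    intro D
    induction D with
    | zero => simpa using he0
    | succ D ih =>
      rw [Finset.sum_range_succ, ← ih]
      exact hE D
  have hTmono : ∀ d d', d ≤ d' → T d ≤ T d' := by
    intro d d' h
    rw [hTdef]
    exact Finset.sum_le_sum_of_subset (Finset.range_subset_range.mpr h)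
  have hF2 : ∀ d, n * d ≤ e d + (r * d + a) :=
    fun d => EpsAux.lower_bound_Vd Q u v ha hv1 hva hQeq d
  set ρ := n - r with hρdef
  have hρ : ρ + r = n := by omega
  have hT1 : T (a+1) ≤ ρ := hTle (a+1)
  have hE1 : e (a+1) ≤ (a+1) * T (a+1) := by
    rw [heD (a+1)]
    calc ∑ d ∈ Finset.range (a+1), T (d+1)
        ≤ ∑ _d ∈ Finset.range (a+1), T (a+1) :=
          Finset.sum_le_sum fun d hd => hTmono _ _ (by
            have := Finset.mem_range.mp hd; omega)
      _ = (a+1) * T (a+1) := by rw [Finset.sum_const, Finset.card_range, smul_eq_mul]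
  have hT2 : ρ ≤ T (a+1) := by
    by_contra hlt
    push_neg at hlt
    have hm : (a+1) * (T (a+1) + 1) ≤ (a+1) * ρ := Nat.mul_le_mul_left _ (by omega)
    have hexp : (a+1) * (T (a+1) + 1) = (a+1) * T (a+1) + (a+1) := by ring
    have hf := hF2 (a+1)
    have hnn : n * (a+1) = ρ * (a+1) + r * (a+1) := by rw [← hρ, Nat.add_mul]
    have hcomm : (a+1) * ρ = ρ * (a+1) := Nat.mul_comm _ _
    linarith [hE1]
  have hTa : T (a+1) = ρ := le_antisymm hT1 hT2
  -- degree sum bound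
  have hsum_deg : ∑ d ∈ Finset.range (a+1), d * t d ≤ a := by
    have h1 := EpsAux.arith_ident t T hTsucc a
    have h2 := heD a
    have hf := hF2 a
    have hnn : n * a = ρ * a + r * a := by rw [← hρ, Nat.add_mul]
    have hcomm : a * T (a+1) = T (a+1) * a := Nat.mul_comm _ _
    have hTa' : T (a+1) * a = ρ * a := by rw [hTa]
    linarith
  -- build the tuple
  have hcardσ : Fintype.card (Σ d : Fin (a+1), Fin (t (d : ℕ))) = n - r := by
    rw [Fintype.card_sigma]
    simp only [Fintype.card_fin]
    rw [← Finset.sum_range (fun d => t d)]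
    exact hTa
  have hcards : Fintype.card (Fin (n - r)) = Fintype.card (Σ d : Fin (a+1), Fin (t (d : ℕ))) := by
    rw [Fintype.card_fin, hcardσ]
  set eqv : Fin (n - r) ≃ (Σ d : Fin (a+1), Fin (t (d : ℕ))) := Fintype.equivOfCardEq hcards
    with heqv
  set x : Fin (n - r) → Fin n → Polynomial ℂ :=
    fun i => b ((eqv i).1 : ℕ) (eqv i).2 with hx
  have hmem : (∑ i, vecDeg (x i)) ∈ {s : ℕ | ∃ x : Fin (n - r) → Fin n → Polynomial ℂ,
      LinearIndependent (RatFunc ℂ)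
        (fun i => fun j => algebraMap (Polynomial ℂ) (RatFunc ℂ) (x i j)) ∧
      (∀ i, Q.mulVec (x i) = 0) ∧
      s = ∑ i, vecDeg (x i)} := by
    refine ⟨x, ?_, ?_, rfl⟩
    · have hind := EpsAux.family_K_indep (D := a+1) hbV hstage
      exact hind.comp eqv eqv.injective
    · intro i
      exact (EpsAux.mem_Vd.mp (hbV ((eqv i).1 : ℕ) (eqv i).2)).2
  have hbound : (∑ i, vecDeg (x i)) ≤ a := by
    have hre : ∑ i, vecDeg (x i) = ∑ i : (Σ d : Fin (a+1), Fin (t (d : ℕ))),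
        vecDeg (b (i.1 : ℕ) i.2) := by
      rw [hx]
      exact Equiv.sum_comp eqv (fun i : (Σ d : Fin (a+1), Fin (t (d : ℕ))) =>
        vecDeg (b (i.1 : ℕ) i.2))
    rw [hre, ← Finset.univ_sigma_univ, Finset.sum_sigma]
    have hinner : ∀ d : Fin (a+1), (∑ k : Fin (t (d : ℕ)), vecDeg (b (d : ℕ) k))
        ≤ t (d : ℕ) * (d : ℕ) := by
      intro d
      calc ∑ k : Fin (t (d : ℕ)), vecDeg (b (d : ℕ) k)
          ≤ ∑ _k : Fin (t (d : ℕ)), (d : ℕ) :=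
            Finset.sum_le_sum fun k _ => EpsAux.vecDeg_le_of_mem_Vd (hbV (d : ℕ) k)
        _ = t (d : ℕ) * (d : ℕ) := by
            rw [Finset.sum_const, Finset.card_univ, Fintype.card_fin, smul_eq_mul]
    calc ∑ d : Fin (a+1), ∑ k : Fin (t (d : ℕ)), vecDeg (b (d : ℕ) k)
        ≤ ∑ d : Fin (a+1), t (d : ℕ) * (d : ℕ) := Finset.sum_le_sum fun d _ => hinner d
      _ = ∑ d ∈ Finset.range (a+1), t d * d := (Finset.sum_range (fun d => t d * d)).symm
      _ = ∑ d ∈ Finset.range (a+1), d * t d := by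
          apply Finset.sum_congr rfl
          intro d _
          ring
      _ ≤ a := hsum_deg
  calc epsSum r Q ≤ ∑ i, vecDeg (x i) := Nat.sInf_le hmem
    _ ≤ a := hbound
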